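/- arXiv:1409.8653 — 8 statements merged into one kernel-verified Lean document; each statement's English description precedes it below -/
import Mathlib

section
/- Let S be a nonempty finite index set and p : S → ℝ with 0 < p i ≤ 1 for all i ∈ S, satisfying the Bounded Ratio Condition with constant Γ ≥ 1. Then for every i ∈ S, the Shannon–Fano length satisfies ⌈log₂(P_S / p i)⌉ ≤ h(S)/P_S + log₂ Γ + log₂ P_S + 1. -/
/-! By the ratio condition every `p j` is at most `Γ · p i`, so each term `-p j log₂ p j` is at least
`-p j log₂ (Γ p i)` and the normalized entropy `h(S)/P_S` is at least `-log₂ Γ - log₂ p i`. The ceiling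
costs at most `1` over `log₂ P_S - log₂ p i`. -/

open Finset Real

theorem neg_logb_le_entropy_div_sum {α : Type*} {S : Finset α} (hS : S.Nonempty) {p : α → ℝ}
    {b M : ℝ} (hb : 1 < b) (hp : ∀ j ∈ S, 0 < p j) (hpM : ∀ j ∈ S, p j ≤ M) :
    -logb b M ≤ (∑ j ∈ S, -(p j * logb b (p j))) / ∑ j ∈ S, p j := by
  rw [le_div_iff₀ (sum_pos hp hS), mul_comm, sum_mul]
  refine sum_le_sum fun j hj => ?_
  have hlog : logb b (p j) ≤ logb b M := logb_le_logb_of_le hb (hp j hj) (hpM j hj)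
  nlinarith [hp j hj]

theorem shannon_fano_length_bound_general {α : Type*} (S : Finset α)
    (p : α → ℝ) (hp : ∀ i ∈ S, 0 < p i ∧ p i ≤ 1)
    (Γ : ℝ)
    (hratio : ∀ i ∈ S, ∀ j ∈ S, p j / p i ≤ Γ) :
    ∀ i ∈ S,
      (⌈Real.logb 2 ((∑ j ∈ S, p j) / p i)⌉ : ℝ) ≤
        (∑ j ∈ S, -(p j * Real.logb 2 (p j))) / (∑ j ∈ S, p j)
          + Real.logb 2 Γ + Real.logb 2 (∑ j ∈ S, p j) + 1 := by
  intro i hi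
  have hpos : ∀ j ∈ S, 0 < p j := fun j hj => (hp j hj).1
  have hpi := hpos i hi
  have hbound : ∀ j ∈ S, p j ≤ Γ * p i := fun j hj =>
    (div_le_iff₀ hpi).1 (hratio i hi j hj)
  have hΓ : 0 < Γ := pos_of_mul_pos_left (hpi.trans_le (hbound i hi)) hpi.le
  have hentropy := neg_logb_le_entropy_div_sum ⟨i, hi⟩ one_lt_two hpos hbound
  rw [logb_mul hΓ.ne' hpi.ne'] at hentropy
  calc (⌈logb 2 ((∑ j ∈ S, p j) / p i)⌉ : ℝ)
      ≤ logb 2 ((∑ j ∈ S, p j) / p i) + 1 := (Int.ceil_lt_add_one _).le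
    _ = logb 2 (∑ j ∈ S, p j) - logb 2 (p i) + 1 := by
      rw [logb_div (sum_pos hpos ⟨i, hi⟩).ne' hpi.ne']
    _ ≤ _ := by linarith

/-- Let `S` be a nonempty finite index set and `p : S → ℝ` with
`0 < p i ≤ 1` for all `i ∈ S`, satisfying the Bounded Ratio Condition with constant
`Γ ≥ 1`.  Then for every `i ∈ S`, the Shannon–Fano length
`⌈log₂ (P_S / p i)⌉` is bounded by `h(S)/P_S + log₂ Γ + log₂ P_S + 1`. -/
theorem shannon_fano_length_bound {α : Type*} (S : Finset α) (hS : S.Nonempty)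
    (p : α → ℝ) (hp : ∀ i ∈ S, 0 < p i ∧ p i ≤ 1)
    (Γ : ℝ) (hΓ : 1 ≤ Γ)
    (hratio : ∀ i ∈ S, ∀ j ∈ S, p j / p i ≤ Γ) :
    ∀ i ∈ S,
      (⌈Real.logb 2 ((∑ j ∈ S, p j) / p i)⌉ : ℝ) ≤
        (∑ j ∈ S, -(p j * Real.logb 2 (p j))) / (∑ j ∈ S, p j)
          + Real.logb 2 Γ + Real.logb 2 (∑ j ∈ S, p j) + 1 :=
  shannon_fano_length_bound_general S p hp Γ hratio
end

section
/- Let S be a nonempty finite index set and p : S → ℝ with 0 < p i ≤ 1 for all i ∈ S, satisfying the Bounded Ratio Condition with constant Γ ≥ 1. Then for every i ∈ S, −P_S · log₂(p i) ≤ h(S) + P_S · log₂ Γ. -/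
/-! Multiplying `log₂ p j - log₂ p i ≤ log₂ Γ` by `p j` and summing over `j ∈ S` gives the bound. -/

open Finset Real

theorem neg_mul_logb_le_of_div_le {b x y Γ : ℝ} (hb : 1 < b) (hx : 0 < x) (hy : 0 < y)
    (h : y / x ≤ Γ) : -(y * logb b x) ≤ -(y * logb b y) + y * logb b Γ := by
  have hlog : logb b y - logb b x ≤ logb b Γ := by
    rw [← logb_div hy.ne' hx.ne']
    exact logb_le_logb_of_le hb (div_pos hy hx) h
  linarith [mul_le_mul_of_nonneg_left hlog hy.le]

theorem bounded_ratio_log_bound_general {α : Type*} (S : Finset α)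
    (p : α → ℝ) (hp : ∀ i ∈ S, 0 < p i ∧ p i ≤ 1)
    (Γ : ℝ)
    (hratio : ∀ i ∈ S, ∀ j ∈ S, p j / p i ≤ Γ) :
    ∀ i ∈ S,
      -(∑ j ∈ S, p j) * Real.logb 2 (p i) ≤
        (∑ j ∈ S, -(p j * Real.logb 2 (p j))) + (∑ j ∈ S, p j) * Real.logb 2 Γ := by
  intro i hi
  calc -(∑ j ∈ S, p j) * logb 2 (p i)
      = ∑ j ∈ S, -(p j * logb 2 (p i)) := by rw [sum_neg_distrib, ← sum_mul, neg_mul]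
    _ ≤ ∑ j ∈ S, (-(p j * logb 2 (p j)) + p j * logb 2 Γ) :=
        sum_le_sum fun j hj ↦ neg_mul_logb_le_of_div_le one_lt_two (hp i hi).1 (hp j hj).1
          (hratio i hi j hj)
    _ = (∑ j ∈ S, -(p j * logb 2 (p j))) + (∑ j ∈ S, p j) * logb 2 Γ := by
        rw [sum_add_distrib, ← sum_mul]

/-- Let `S` be a nonempty finite index set and `p : S → ℝ` with
`0 < p i ≤ 1` for all `i ∈ S`, satisfying the Bounded Ratio Condition with constant
`Γ ≥ 1`.  Then for every `i ∈ S`, `−P_S · log₂ (p i) ≤ h(S) + P_S · log₂ Γ`. -/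
theorem bounded_ratio_log_bound {α : Type*} (S : Finset α) (hS : S.Nonempty)
    (p : α → ℝ) (hp : ∀ i ∈ S, 0 < p i ∧ p i ≤ 1)
    (Γ : ℝ) (hΓ : 1 ≤ Γ)
    (hratio : ∀ i ∈ S, ∀ j ∈ S, p j / p i ≤ Γ) :
    ∀ i ∈ S,
      -(∑ j ∈ S, p j) * Real.logb 2 (p i) ≤
        (∑ j ∈ S, -(p j * Real.logb 2 (p j))) + (∑ j ∈ S, p j) * Real.logb 2 Γ :=
  bounded_ratio_log_bound_general S p hp Γ hratio
end

section
/- Let S be a nonempty finite index set and p : S → ℝ with 0 < p i ≤ 1 for all i ∈ S, satisfying the Bounded Ratio Condition with constant Γ ≥ 1. Let (U i)_{i∈S} be independent Bernoulli random variables with P(U i = 1) = p i. Then the random variable T_S = 1 + ∑_{i∈S} U i · ⌈log₂(P_S / p i)⌉ satisfies E[T_S] ≤ h(S) + P_S·log₂ Γ + P_S·log₂ P_S + P_S + 1. -/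
open MeasureTheory ProbabilityTheory

/-!
By linearity of expectation, `E[T_S] = 1 + ∑ p i · ℓ_i`. Since `ℓ_i < log₂ P_S - log₂ (p i) + 1`,
this is at most `h(S) + P_S log₂ P_S + P_S + 1`, and `P_S log₂ Γ ≥ 0` because `Γ ≥ 1`.
-/

open Real

lemma ite_const_eq_indicator {Ω E : Type*} [Zero E] (f : Ω → Bool) (c : E) :
    (fun ω => if f ω then c else 0) = {ω | f ω = true}.indicator (fun _ => c) := by
  ext ω
  simp [Set.indicator_apply]

section Expectation

variable {Ω α : Type*} [MeasurableSpace Ω] {μ : Measure Ω}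

lemma integral_ite_const {E : Type*} [NormedAddCommGroup E] [NormedSpace ℝ E] [CompleteSpace E]
    {f : Ω → Bool} (hf : Measurable f) (c : E) :
    ∫ ω, (if f ω then c else 0) ∂μ = μ.real {ω | f ω = true} • c := by
  simp only [ite_const_eq_indicator f c]
  exact integral_indicator_const _ (hf (measurableSet_singleton true))

lemma integrable_ite_const {E : Type*} [NormedAddCommGroup E] [IsFiniteMeasure μ]
    {f : Ω → Bool} (hf : Measurable f) (c : E) :
    Integrable (fun ω => if f ω then c else 0) μ := by
  rw [ite_const_eq_indicator]
  exact (integrable_const c).indicator (hf (measurableSet_singleton true))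

lemma integral_one_add_sum_ite [IsProbabilityMeasure μ] {U : α → Ω → Bool}
    (hU : ∀ i, Measurable (U i)) (S : Finset α) (c : α → ℝ) :
    ∫ ω, (1 + ∑ i ∈ S, if U i ω then c i else 0) ∂μ =
      1 + ∑ i ∈ S, μ.real {ω | U i ω = true} * c i := by
  have hint : ∀ i ∈ S, Integrable (fun ω => if U i ω then c i else 0) μ :=
    fun i _ => integrable_ite_const (hU i) (c i)
  rw [integral_add (integrable_const 1) (integrable_finsetSum S hint), integral_finsetSum S hint]
  simp only [integral_const, probReal_univ, integral_ite_const (hU _), smul_eq_mul, one_mul]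

end Expectation

lemma mul_ceil_logb_div_le (b : ℝ) {q P : ℝ} (hq : 0 < q) (hP : 0 < P) :
    q * ⌈logb b (P / q)⌉ ≤ -(q * logb b q) + q * logb b P + q := by
  calc q * (⌈logb b (P / q)⌉ : ℝ)
      ≤ q * (logb b (P / q) + 1) := by gcongr; exact (Int.ceil_lt_add_one _).le
    _ = -(q * logb b q) + q * logb b P + q := by
      rw [logb_div hP.ne' hq.ne']; ring

lemma sum_mul_ceil_logb_div_le {α : Type*} (b : ℝ) (S : Finset α) {p : α → ℝ}
    (hp : ∀ i ∈ S, 0 < p i) :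
    ∑ i ∈ S, p i * ⌈logb b ((∑ j ∈ S, p j) / p i)⌉ ≤
      (∑ j ∈ S, -(p j * logb b (p j))) + (∑ j ∈ S, p j) * logb b (∑ j ∈ S, p j)
        + ∑ j ∈ S, p j := by
  have hP : ∀ i ∈ S, 0 < ∑ j ∈ S, p j := fun i hi =>
    (hp i hi).trans_le (Finset.single_le_sum (fun j hj => (hp j hj).le) hi)
  calc ∑ i ∈ S, p i * (⌈logb b ((∑ j ∈ S, p j) / p i)⌉ : ℝ)
      ≤ ∑ i ∈ S, (-(p i * logb b (p i)) + p i * logb b (∑ j ∈ S, p j) + p i) :=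
        Finset.sum_le_sum fun i hi => mul_ceil_logb_div_le b (hp i hi) (hP i hi)
    _ = _ := by rw [Finset.sum_add_distrib, Finset.sum_add_distrib, ← Finset.sum_mul]

theorem expected_tests_bound_general {α : Type*} (S : Finset α)
    (p : α → ℝ) (hp : ∀ i ∈ S, 0 < p i ∧ p i ≤ 1)
    (Γ : ℝ) (hΓ : 1 ≤ Γ)
    {Ω : Type*} [MeasurableSpace Ω] (μ : Measure Ω) [IsProbabilityMeasure μ]
    (U : α → Ω → Bool) (hUmeas : ∀ i, Measurable (U i))
    (hUp : ∀ i ∈ S, μ {ω | U i ω = true} = ENNReal.ofReal (p i)) :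
    (∫ ω, (1 + ∑ i ∈ S,
        (if U i ω then (⌈Real.logb 2 ((∑ j ∈ S, p j) / p i)⌉ : ℝ) else 0)) ∂μ) ≤
      (∑ j ∈ S, -(p j * Real.logb 2 (p j)))
        + (∑ j ∈ S, p j) * Real.logb 2 Γ
        + (∑ j ∈ S, p j) * Real.logb 2 (∑ j ∈ S, p j)
        + (∑ j ∈ S, p j) + 1 := by
  have hprob : ∀ i ∈ S, μ.real {ω | U i ω = true} = p i := fun i hi => by
    rw [measureReal_def, hUp i hi, ENNReal.toReal_ofReal (hp i hi).1.le]
  rw [integral_one_add_sum_ite hUmeas, Finset.sum_congr rfl fun i hi => by rw [hprob i hi]]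
  have hlengths := sum_mul_ceil_logb_div_le 2 S fun i hi => (hp i hi).1
  have hΓterm : 0 ≤ (∑ j ∈ S, p j) * logb 2 Γ :=
    mul_nonneg (Finset.sum_nonneg fun i hi => (hp i hi).1.le) (logb_nonneg one_lt_two hΓ)
  linarith

/-- Let `S` be a nonempty finite set satisfying the Bounded Ratio
Condition with constant `Γ ≥ 1`, and let `(U i)` be independent Bernoulli random
variables with `P(U i = 1) = p i`.  Then the number of tests
`T_S = 1 + ∑ i ∈ S, U i · ⌈log₂ (P_S / p i)⌉` satisfies
`E[T_S] ≤ h(S) + P_S log₂ Γ + P_S log₂ P_S + P_S + 1`. -/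
theorem expected_tests_bound {α : Type*} (S : Finset α) (hS : S.Nonempty)
    (p : α → ℝ) (hp : ∀ i ∈ S, 0 < p i ∧ p i ≤ 1)
    (Γ : ℝ) (hΓ : 1 ≤ Γ)
    (hratio : ∀ i ∈ S, ∀ j ∈ S, p j / p i ≤ Γ)
    {Ω : Type*} [MeasurableSpace Ω] (μ : Measure Ω) [IsProbabilityMeasure μ]
    (U : α → Ω → Bool) (hUmeas : ∀ i, Measurable (U i))
    (hUindep : iIndepFun U μ)
    (hUp : ∀ i ∈ S, μ {ω | U i ω = true} = ENNReal.ofReal (p i)) :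
    (∫ ω, (1 + ∑ i ∈ S,
        (if U i ω then (⌈Real.logb 2 ((∑ j ∈ S, p j) / p i)⌉ : ℝ) else 0)) ∂μ) ≤
      (∑ j ∈ S, -(p j * Real.logb 2 (p j)))
        + (∑ j ∈ S, p j) * Real.logb 2 Γ
        + (∑ j ∈ S, p j) * Real.logb 2 (∑ j ∈ S, p j)
        + (∑ j ∈ S, p j) + 1 :=
  expected_tests_bound_general S p hp Γ hΓ μ U hUmeas hUp
end

section
/- Let p : Fin n → ℝ with 0 < p i ≤ 1 for all i, and let 0 < θ < 1. Then ∑_{i : p i ≤ θ} p i ≤ H / (−log₂ θ), where H = ∑_{i} h(p i) and h is the binary entropy function. -/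
/-!
An item with `p ≤ θ` carries entropy at least `p · log p⁻¹ ≥ p · log θ⁻¹`, and every item carries
nonnegative entropy; summing over all items and dividing by `log θ⁻¹ > 0` gives the bound (the
base-2 logarithms only rescale both sides by `log 2`).
-/

open Real Finset

lemma neg_mul_logb_sub_mul_logb_one_sub_eq_binEntropy_div (x : ℝ) :
    -(x * logb 2 x) - (1 - x) * logb 2 (1 - x) = binEntropy x / log 2 := by
  simp only [binEntropy, logb, log_inv]
  ring

lemma mul_log_inv_le_binEntropy {p θ : ℝ} (hp₀ : 0 ≤ p) (hp₁ : p ≤ 1) (hpθ : p ≤ θ) :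
    p * log θ⁻¹ ≤ binEntropy p := by
  rcases hp₀.eq_or_lt with rfl | hp₀
  · simp
  have h_self : p * log θ⁻¹ ≤ p * log p⁻¹ :=
    mul_le_mul_of_nonneg_left
      (log_le_log (inv_pos.2 (hp₀.trans_le hpθ)) (inv_anti₀ hp₀ hpθ)) hp₀.le
  have h_other : 0 ≤ (1 - p) * log (1 - p)⁻¹ :=
    mul_nonneg (by linarith)
      (log_inv (1 - p) ▸ neg_nonneg.2 (log_nonpos (by linarith) (by linarith)))
  rw [binEntropy]
  linarith

lemma sum_filter_le_mul_log_inv_le_sum_binEntropy {ι : Type*} (s : Finset ι) (p : ι → ℝ)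
    (hp : ∀ i ∈ s, 0 ≤ p i ∧ p i ≤ 1) (θ : ℝ) :
    (∑ i ∈ s with p i ≤ θ, p i) * log θ⁻¹ ≤ ∑ i ∈ s, binEntropy (p i) := by
  rw [sum_mul]
  calc ∑ i ∈ s with p i ≤ θ, p i * log θ⁻¹
      ≤ ∑ i ∈ s with p i ≤ θ, binEntropy (p i) := by
        refine sum_le_sum fun i hi => ?_
        obtain ⟨his, hiθ⟩ := mem_filter.1 hi
        exact mul_log_inv_le_binEntropy (hp i his).1 (hp i his).2 hiθ
    _ ≤ ∑ i ∈ s, binEntropy (p i) :=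
        sum_le_sum_of_subset_of_nonneg (filter_subset _ _) fun i hi _ =>
          binEntropy_nonneg (hp i hi).1 (hp i hi).2

/-- Let `p : Fin n → ℝ` with `0 < p i ≤ 1`, and let `0 < θ < 1`.
Then the total probability of items below the threshold `θ` satisfies
`∑_{i : p i ≤ θ} p i ≤ H / (−log₂ θ)`, where `H = ∑ i, h (p i)` is the entropy of
the defectivity vector (with `h` the binary entropy function). -/
theorem discarded_mass_entropy_bound {n : ℕ} (p : Fin n → ℝ)
    (hp : ∀ i, 0 < p i ∧ p i ≤ 1) (θ : ℝ) (hθ : 0 < θ) (hθ1 : θ < 1) :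
    ∑ i ∈ Finset.univ.filter (fun i => p i ≤ θ), p i ≤
      (∑ i, (-(p i * Real.logb 2 (p i)) - (1 - p i) * Real.logb 2 (1 - p i)))
        / (-Real.logb 2 θ) := by
  have h_log : 0 < log θ⁻¹ := log_pos (one_lt_inv₀ hθ |>.2 hθ1)
  have h_rhs : (∑ i, (-(p i * logb 2 (p i)) - (1 - p i) * logb 2 (1 - p i))) / (-logb 2 θ)
      = (∑ i, binEntropy (p i)) / log θ⁻¹ := by
    rw [show -logb 2 θ = log θ⁻¹ / log 2 by rw [logb, log_inv, neg_div]]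
    simp_rw [neg_mul_logb_sub_mul_logb_one_sub_eq_binEntropy_div]
    rw [← sum_div, div_div_div_cancel_right₀ (log_pos one_lt_two).ne']
  rw [h_rhs, le_div_iff₀ h_log]
  exact sum_filter_le_mul_log_inv_le_sum_binEntropy univ p
    (fun i _ => ⟨(hp i).1.le, (hp i).2⟩) θ
end

section
/- Let p : Fin n → ℝ with 0 < p i ≤ 1 for all i, let H = ∑_i h(p i) with H > 0, and let 0 < P_e ≤ 1. Define the threshold θ = θ(P_e) by −log₂ θ = min( log₂(2n/P_e), 2H/P_e ). Let (U i) be independent Bernoulli random variables with P(U i = 1) = p i. Then the probability that some item i with p i ≤ θ is defective satisfies P(∃ i, p i ≤ θ and U i = 1) ≤ P_e / 2. -/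
/-!
By the union bound the error probability is at most `S = ∑_{p i ≤ θ} p i`. Trivially `S ≤ n θ`,
and since `p (-log₂ θ) ≤ -p log₂ p ≤ h(p)` for `p ≤ θ`, also `S · (-log₂ θ) ≤ H`. Whichever term
realises the minimum defining `θ`, one of these two bounds gives `S ≤ P_e / 2`.
-/

open MeasureTheory ProbabilityTheory Finset

theorem measure_exists_mem_true_le {ι Ω : Type*} [MeasurableSpace Ω] (μ : Measure Ω)
    (s : Finset ι) (U : ι → Ω → Bool) (p : ι → ℝ) (hp : ∀ i ∈ s, 0 ≤ p i)
    (hUp : ∀ i ∈ s, μ {ω | U i ω = true} = ENNReal.ofReal (p i)) :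
    μ {ω | ∃ i ∈ s, U i ω = true} ≤ ENNReal.ofReal (∑ i ∈ s, p i) := by
  have hunion : {ω | ∃ i ∈ s, U i ω = true} = ⋃ i ∈ s, {ω | U i ω = true} := by
    ext ω; simp
  rw [hunion, ENNReal.ofReal_sum_of_nonneg hp, ← sum_congr rfl hUp]
  exact measure_biUnion_finset_le s _

noncomputable def binEntropyBits (t : ℝ) : ℝ :=
  -(t * Real.logb 2 t) - (1 - t) * Real.logb 2 (1 - t)

theorem mul_logb_one_sub_nonpos {t : ℝ} (h0 : 0 ≤ t) (h1 : t ≤ 1) :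
    (1 - t) * Real.logb 2 (1 - t) ≤ 0 :=
  mul_nonpos_of_nonneg_of_nonpos (by linarith) (Real.logb_nonpos one_lt_two (by linarith) (by linarith))

theorem binEntropyBits_nonneg {t : ℝ} (h0 : 0 ≤ t) (h1 : t ≤ 1) : 0 ≤ binEntropyBits t := by
  have := mul_nonpos_of_nonneg_of_nonpos h0 (Real.logb_nonpos one_lt_two h0 h1)
  have := mul_logb_one_sub_nonpos h0 h1
  unfold binEntropyBits
  linarith

theorem mul_neg_logb_le_binEntropyBits {t θ : ℝ} (h0 : 0 < t) (h1 : t ≤ 1) (hθ : t ≤ θ) :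
    t * -Real.logb 2 θ ≤ binEntropyBits t := by
  have hlog : Real.logb 2 t ≤ Real.logb 2 θ := Real.logb_le_logb_of_le one_lt_two h0 hθ
  have := mul_logb_one_sub_nonpos h0.le h1
  unfold binEntropyBits
  nlinarith

theorem sum_le_mul_neg_logb_le_sum_binEntropyBits {ι : Type*} [Fintype ι] (p : ι → ℝ)
    (hp : ∀ i, 0 < p i ∧ p i ≤ 1) (θ : ℝ) :
    (∑ i with p i ≤ θ, p i) * -Real.logb 2 θ ≤ ∑ i, binEntropyBits (p i) := by
  rw [sum_mul]
  calc ∑ i with p i ≤ θ, p i * -Real.logb 2 θ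
      ≤ ∑ i with p i ≤ θ, binEntropyBits (p i) :=
        sum_le_sum fun i hi => mul_neg_logb_le_binEntropyBits (hp i).1 (hp i).2 (mem_filter.1 hi).2
    _ ≤ ∑ i, binEntropyBits (p i) :=
        sum_le_sum_of_subset_of_nonneg (filter_subset _ _)
          fun i _ _ => binEntropyBits_nonneg (hp i).1.le (hp i).2

theorem eq_inv_of_neg_logb_eq_logb {θ x : ℝ} (hθ : 0 < θ) (hx : 0 < x)
    (h : -Real.logb 2 θ = Real.logb 2 x) : θ = x⁻¹ := by
  refine Real.logb_injOn_pos one_lt_two hθ (inv_pos.2 hx) ?_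
  rw [Real.logb_inv]
  linarith

theorem truncation_error_bound_general {n : ℕ} (p : Fin n → ℝ)
    (hp : ∀ i, 0 < p i ∧ p i ≤ 1)
    (H : ℝ)
    (hH : H = ∑ i, (-(p i * Real.logb 2 (p i)) - (1 - p i) * Real.logb 2 (1 - p i)))
    (hHpos : 0 < H)
    (P_e : ℝ) (hPe : 0 < P_e)
    (θ : ℝ) (hθpos : 0 < θ)
    (hθ : -Real.logb 2 θ = min (Real.logb 2 (2 * n / P_e)) (2 * H / P_e))
    {Ω : Type*} [MeasurableSpace Ω] (μ : Measure Ω)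
    (U : Fin n → Ω → Bool)
    (hUp : ∀ i, μ {ω | U i ω = true} = ENNReal.ofReal (p i)) :
    μ {ω | ∃ i, p i ≤ θ ∧ U i ω = true} ≤ ENNReal.ofReal (P_e / 2) := by
  set S := ∑ i with p i ≤ θ, p i
  have hunion : μ {ω | ∃ i, p i ≤ θ ∧ U i ω = true} ≤ ENNReal.ofReal S := by
    convert measure_exists_mem_true_le μ {i | p i ≤ θ} U p (fun i _ => (hp i).1.le)
      (fun i _ => hUp i) using 3
    simp
  refine hunion.trans (ENNReal.ofReal_le_ofReal ?_)
  rcases min_cases (Real.logb 2 (2 * n / P_e)) (2 * H / P_e) with ⟨hmin, _⟩ | ⟨hmin, _⟩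
  · have hcount : S ≤ n * θ := by
      simpa using (sum_le_card_nsmul _ p θ fun i hi => (mem_filter.1 hi).2).trans
        (nsmul_le_nsmul_left hθpos.le (card_le_univ _))
    rcases n.eq_zero_or_pos with rfl | hn
    · linarith [show S ≤ 0 by simpa using hcount]
    · have hθeq := eq_inv_of_neg_logb_eq_logb hθpos (by positivity) (hθ.trans hmin)
      rw [hθeq] at hcount
      field_simp at hcount ⊢
      linarith
  · have hentropy := sum_le_mul_neg_logb_le_sum_binEntropyBits p hp θ
    rw [hθ, hmin, show ∑ i, binEntropyBits (p i) = H from hH.symm] at hentropy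
    rw [mul_div_assoc', div_le_iff₀ hPe] at hentropy
    nlinarith

/-- With threshold `θ = θ(P_e)` defined by
`−log₂ θ = min (log₂ (2n/P_e), 2H/P_e)`, the probability that some item of
probability at most `θ` is defective is at most `P_e / 2`. -/
theorem truncation_error_bound {n : ℕ} (p : Fin n → ℝ)
    (hp : ∀ i, 0 < p i ∧ p i ≤ 1)
    (H : ℝ)
    (hH : H = ∑ i, (-(p i * Real.logb 2 (p i)) - (1 - p i) * Real.logb 2 (1 - p i)))
    (hHpos : 0 < H)
    (P_e : ℝ) (hPe : 0 < P_e) (hPe1 : P_e ≤ 1)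
    (θ : ℝ) (hθpos : 0 < θ)
    (hθ : -Real.logb 2 θ = min (Real.logb 2 (2 * n / P_e)) (2 * H / P_e))
    {Ω : Type*} [MeasurableSpace Ω] (μ : Measure Ω) [IsProbabilityMeasure μ]
    (U : Fin n → Ω → Bool) (hUmeas : ∀ i, Measurable (U i))
    (hUindep : iIndepFun U μ)
    (hUp : ∀ i, μ {ω | U i ω = true} = ENNReal.ofReal (p i)) :
    μ {ω | ∃ i, p i ≤ θ ∧ U i ω = true} ≤ ENNReal.ofReal (P_e / 2) :=
  truncation_error_bound_general p hp H hH hHpos P_e hPe θ hθpos hθ μ U hUp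
end

section
/- Let 0 < θ < 1/2, let Γ > 1, and let p : Fin n → ℝ satisfy θ < p i ≤ 1 for all i. Write μ = ∑_i p i. Then there exists G ∈ ℕ and a partition of Fin n into pairwise disjoint nonempty sets S_1, …, S_G covering Fin n, such that: (a) each S_j satisfies the Bounded Ratio Condition with constant Γ, i.e. p k / p i ≤ Γ for all i, k ∈ S_j; (b) each S_j has total probability P_j = ∑_{i∈S_j} p i ≤ 1; and (c) G ≤ 2μ + (−log₂(2θ))/(log₂ Γ) + 1. -/
/-!
Items lighter than `1/2` are sorted into the geometric bands `θ Γ^m ≤ p < θ Γ^(m+1)`; all of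
them lie in the bands `m ≤ log_Γ (1/(2θ))`, and within one band all ratios are below `Γ`.
Each band is packed greedily: as long as its remaining mass exceeds `1`, split off a set of mass
between `1/2` and `1`. This uses at most `2 · (mass of the band) + 1` sets per band. Every item
heavier than `1/2` forms a set of its own, which costs at most twice its mass.
-/

open Finset Real

variable {α : Type*}

def BoundedRatio (Γ : ℝ) (p : α → ℝ) (t : Finset α) : Prop :=
  ∀ i ∈ t, ∀ k ∈ t, p k / p i ≤ Γ

theorem div_lt_of_natFloor_logb_eq {b x y : ℝ} (hb : 1 < b) (hx : 1 ≤ x) (hy : 0 < y)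
    (h : ⌊logb b x⌋₊ = ⌊logb b y⌋₊) : y / x < b := by
  have hx' : (⌊logb b x⌋₊ : ℝ) ≤ logb b x := Nat.floor_le (logb_nonneg hb hx)
  have hy' : logb b y < ⌊logb b y⌋₊ + 1 := Nat.lt_floor_add_one _
  have hlog : logb b (y / x) < 1 := by
    rw [logb_div hy.ne' (by positivity)]
    rw [h] at hx'
    linarith
  rwa [logb_lt_iff_lt_rpow hb (by positivity), rpow_one] at hlog

theorem boundedRatio_of_natFloor_logb_eq {t : Finset α} {p : α → ℝ} {θ Γ : ℝ} {k : ℕ}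
    (hθ : 0 < θ) (hΓ : 1 < Γ) (hp : ∀ i ∈ t, θ ≤ p i)
    (hband : ∀ i ∈ t, ⌊logb Γ (p i / θ)⌋₊ = k) : BoundedRatio Γ p t := by
  intro i hi j hj
  have hratio := div_lt_of_natFloor_logb_eq hΓ ((one_le_div hθ).2 (hp i hi))
    (div_pos (hθ.trans_le (hp j hj)) hθ) ((hband i hi).trans (hband j hj).symm)
  rw [div_div_div_cancel_right₀ hθ.ne'] at hratio
  exact hratio.le

variable [DecidableEq α]

theorem exists_subset_sum_mem_Icc {s : Finset α} {f : α → ℝ} {c : ℝ} (hc : 0 ≤ c)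
    (hf : ∀ i ∈ s, f i ≤ c) (hs : c ≤ ∑ i ∈ s, f i) :
    ∃ t ⊆ s, c ≤ ∑ i ∈ t, f i ∧ ∑ i ∈ t, f i ≤ 2 * c := by
  induction s using Finset.strongInduction with
  | H s ih =>
  by_cases hle : ∑ i ∈ s, f i ≤ 2 * c
  · exact ⟨s, subset_rfl, hs, hle⟩
  obtain ⟨a, ha⟩ : s.Nonempty := nonempty_of_sum_ne_zero (f := f) (by linarith)
  have hsum := add_sum_erase s f ha
  obtain ⟨t, hts, ht⟩ := ih (s.erase a) (erase_ssubset ha)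
    (fun i hi => hf i (mem_of_mem_erase hi)) (by linarith [hf a ha])
  exact ⟨t, hts.trans (erase_subset a s), ht⟩

namespace Finpartition

theorem exists_parts_eq_union {s t u : Finset α} (hst : Disjoint s t) (hu : s ∪ t = u)
    (P : Finpartition s) (Q : Finpartition t) :
    ∃ R : Finpartition u, R.parts = P.parts ∪ Q.parts := by
  have hdisj : ((P.parts ∪ Q.parts : Finset (Finset α)) : Set (Finset α)).PairwiseDisjoint id := by
    rintro x hx y hy hxy
    rw [coe_union, Set.mem_union] at hx hy
    rcases hx with hx | hx <;> rcases hy with hy | hy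
    · exact P.disjoint hx hy hxy
    · exact hst.mono (P.le hx) (Q.le hy)
    · exact (hst.mono (P.le hy) (Q.le hx)).symm
    · exact Q.disjoint hx hy hxy
  have hsup : (P.parts ∪ Q.parts).sup id = u := by
    rw [sup_union, P.sup_parts, Q.sup_parts, ← hu]
    rfl
  refine ⟨(ofPairwiseDisjoint _ hdisj).copy hsup, ?_⟩
  simp only [copy_parts, ofPairwiseDisjoint_parts]
  exact erase_eq_of_notMem (by simp)

theorem exists_of_fiberwise {β : Type*} [DecidableEq β] {s : Finset α} (b : α → β) (K : Finset β)
    (hb : ∀ i ∈ s, b i ∈ K) (Φ : Finset α → Prop) (g : β → ℝ)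
    (h : ∀ k ∈ K, ∃ P : Finpartition (s.filter (b · = k)),
      (∀ t ∈ P.parts, Φ t) ∧ (#P.parts : ℝ) ≤ g k) :
    ∃ P : Finpartition s, (∀ t ∈ P.parts, Φ t) ∧ (#P.parts : ℝ) ≤ ∑ k ∈ K, g k := by
  choose! Q hQ hQcard using h
  have hindep : K.SupIndep (fun k => s.filter (b · = k)) :=
    supIndep_iff_pairwiseDisjoint.2 fun k _ l _ hkl =>
      disjoint_filter.2 fun i _ hk hl => hkl (hk.symm.trans hl)
  have hsup : K.sup (fun k => s.filter (b · = k)) = s := by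
    ext i
    simp only [mem_sup, mem_filter]
    exact ⟨fun ⟨_, _, hi, _⟩ => hi, fun hi => ⟨b i, hb i hi, hi, rfl⟩⟩
  refine ⟨(combine Q hindep).copy hsup, fun t ht => ?_, ?_⟩
  · obtain ⟨k, hk, ht⟩ := mem_biUnion.1 ht
    exact hQ k hk t ht
  · calc (#((combine Q hindep).copy hsup).parts : ℝ) ≤ ∑ k ∈ K, (#(Q k).parts : ℝ) := by
          exact_mod_cast card_biUnion_le
      _ ≤ ∑ k ∈ K, g k := sum_le_sum hQcard

theorem exists_fin_family [Fintype α] (P : Finpartition (univ : Finset α)) :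
    ∃ S : Fin #P.parts → Finset α, (∀ j, S j ∈ P.parts) ∧ (∀ j, (S j).Nonempty) ∧
      (∀ j k, j ≠ k → Disjoint (S j) (S k)) ∧ ∀ i, ∃ j, i ∈ S j := by
  refine ⟨fun j => P.parts.equivFin.symm j, fun j => (P.parts.equivFin.symm j).2,
    fun j => P.nonempty_of_mem_parts (P.parts.equivFin.symm j).2, fun j k hjk => ?_, fun i => ?_⟩
  · exact P.disjoint (P.parts.equivFin.symm j).2 (P.parts.equivFin.symm k).2
      fun h => hjk (P.parts.equivFin.symm.injective (Subtype.ext h))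
  · obtain ⟨t, ht, hit⟩ := P.exists_mem (mem_univ i)
    exact ⟨P.parts.equivFin ⟨t, ht⟩, by simpa using hit⟩

end Finpartition

theorem exists_finpartition_sum_le_one {s : Finset α} {f : α → ℝ} (hf₀ : ∀ i ∈ s, 0 ≤ f i)
    (hf : ∀ i ∈ s, f i ≤ 1 / 2) :
    ∃ P : Finpartition s, (∀ t ∈ P.parts, ∑ i ∈ t, f i ≤ 1) ∧
      (#P.parts : ℝ) ≤ 2 * ∑ i ∈ s, f i + 1 := by
  induction s using Finset.strongInduction with
  | H s ih =>
  by_cases hs : ∑ i ∈ s, f i ≤ 1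
  · refine ⟨⊤, fun t ht => by rwa [mem_singleton.1 (Finpartition.parts_top_subset s ht)], ?_⟩
    have hcard : (#(⊤ : Finpartition s).parts : ℝ) ≤ 1 := by
      exact_mod_cast (card_le_card (Finpartition.parts_top_subset s)).trans (card_singleton s).le
    linarith [sum_nonneg hf₀]
  rw [not_le] at hs
  obtain ⟨t, hts, hlo, hhi⟩ := exists_subset_sum_mem_Icc (by norm_num) hf (by linarith)
  have ht : t.Nonempty := nonempty_of_sum_ne_zero (f := f) (by linarith)
  obtain ⟨P, hP, hcard⟩ := ih (s \ t) (sdiff_ssubset hts ht)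
    (fun i hi => hf₀ i (mem_sdiff.1 hi).1) (fun i hi => hf i (mem_sdiff.1 hi).1)
  refine ⟨P.extend ht.ne_empty sdiff_disjoint (sdiff_sup_cancel hts), ?_, ?_⟩
  · simp only [Finpartition.extend_parts, forall_mem_insert]
    exact ⟨by linarith, hP⟩
  · rw [Finpartition.card_extend]
    have := sum_sdiff hts (f := f)
    push_cast
    linarith

theorem exists_finpartition_boundedRatio_of_le_half {s : Finset α} {p : α → ℝ} {θ Γ : ℝ}
    (hθ : 0 < θ) (hθhalf : 2 * θ ≤ 1) (hΓ : 1 < Γ) (hp : ∀ i ∈ s, θ < p i ∧ p i ≤ 1 / 2) :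
    ∃ P : Finpartition s, (∀ t ∈ P.parts, BoundedRatio Γ p t ∧ ∑ i ∈ t, p i ≤ 1) ∧
      (#P.parts : ℝ) ≤ 2 * ∑ i ∈ s, p i + logb Γ (2 * θ)⁻¹ + 1 := by
  set L := logb Γ (2 * θ)⁻¹
  let band : α → ℕ := fun i => ⌊logb Γ (p i / θ)⌋₊
  have hband : ∀ i ∈ s, band i ∈ range (⌊L⌋₊ + 1) := by
    intro i hi
    refine mem_range_succ_iff.2 (Nat.floor_le_floor (logb_le_logb_of_le hΓ ?_ ?_))
    · exact div_pos (hθ.trans (hp i hi).1) hθ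
    · rw [div_le_iff₀ hθ]
      calc p i ≤ 1 / 2 := (hp i hi).2
        _ = (2 * θ)⁻¹ * θ := by field_simp
  obtain ⟨P, hP, hcard⟩ := Finpartition.exists_of_fiberwise band (range (⌊L⌋₊ + 1)) hband
    (fun t => BoundedRatio Γ p t ∧ ∑ i ∈ t, p i ≤ 1)
    (fun k => 2 * ∑ i ∈ s.filter (band · = k), p i + 1) fun k _ => by
      obtain ⟨P, hP, hcard⟩ := exists_finpartition_sum_le_one (s := s.filter (band · = k)) (f := p)
        (fun i hi => (hθ.trans (hp i (mem_filter.1 hi).1).1).le)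
        (fun i hi => (hp i (mem_filter.1 hi).1).2)
      refine ⟨P, fun t ht => ⟨?_, hP t ht⟩, hcard⟩
      exact boundedRatio_of_natFloor_logb_eq hθ hΓ
        (fun i hi => (hp i (mem_filter.1 (P.le ht hi)).1).1.le)
        (fun i hi => (mem_filter.1 (P.le ht hi)).2)
  refine ⟨P, hP, hcard.trans ?_⟩
  rw [sum_add_distrib, ← mul_sum, sum_fiberwise_of_maps_to hband, sum_const, card_range, nsmul_one]
  have hL : 0 ≤ L := logb_nonneg hΓ (one_le_inv₀ (by positivity) |>.2 hθhalf)
  have := Nat.floor_le hL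
  push_cast
  linarith

theorem exists_finpartition_boundedRatio [Fintype α] {p : α → ℝ} {θ Γ : ℝ} (hθ : 0 < θ)
    (hθhalf : 2 * θ ≤ 1) (hΓ : 1 < Γ) (hp : ∀ i, θ < p i ∧ p i ≤ 1) :
    ∃ P : Finpartition (univ : Finset α), (∀ t ∈ P.parts, BoundedRatio Γ p t ∧ ∑ i ∈ t, p i ≤ 1) ∧
      (#P.parts : ℝ) ≤ 2 * ∑ i, p i + logb Γ (2 * θ)⁻¹ + 1 := by
  set big := univ.filter (¬p · ≤ 1 / 2)
  obtain ⟨Psmall, hPsmall, hcard⟩ := exists_finpartition_boundedRatio_of_le_half hθ hθhalf hΓ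
    (s := univ.filter (p · ≤ 1 / 2)) fun i hi => ⟨(hp i).1, (mem_filter.1 hi).2⟩
  obtain ⟨P, hP⟩ := Finpartition.exists_parts_eq_union (disjoint_filter_filter_not _ _ _)
    (filter_union_filter_not_eq _ _) Psmall (⊥ : Finpartition big)
  refine ⟨P, fun t ht => ?_, ?_⟩
  · rcases mem_union.1 (hP ▸ ht) with ht | ht
    · exact hPsmall t ht
    obtain ⟨i, -, rfl⟩ := Finpartition.mem_bot_iff.1 ht
    refine ⟨?_, by simpa using (hp i).2⟩
    simp only [BoundedRatio, mem_singleton, forall_eq]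
    exact (div_self_le_one (p i)).trans hΓ.le
  · have hbig : (#big : ℝ) * (1 / 2) ≤ ∑ i ∈ big, p i := by
      rw [← nsmul_eq_mul]
      exact card_nsmul_le_sum _ _ _ fun i hi => (not_le.1 (mem_filter.1 hi).2).le
    have hunion : (#P.parts : ℝ) ≤ #Psmall.parts + #big := by
      rw [hP, ← Finpartition.card_bot big]
      exact_mod_cast card_union_le _ _
    rw [← sum_filter_add_sum_filter_not univ (p · ≤ 1 / 2)]
    linarith

/-- After discarding items of probability at most `θ` (so
`θ < p i ≤ 1` for all remaining items), the population can be partitioned into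
`G` search sets, each satisfying the Bounded Ratio Condition with constant `Γ`
and having total probability at most `1`, where
`G ≤ 2μ + (−log₂(2θ))/log₂ Γ + 1` with `μ = ∑ i, p i`. -/
theorem splitting_into_search_sets {n : ℕ} (θ Γ : ℝ)
    (hθpos : 0 < θ) (hθhalf : θ < 1 / 2) (hΓ : 1 < Γ)
    (p : Fin n → ℝ) (hp : ∀ i, θ < p i ∧ p i ≤ 1) :
    ∃ (G : ℕ) (S : Fin G → Finset (Fin n)),
      (∀ j, (S j).Nonempty) ∧
      (∀ j k, j ≠ k → Disjoint (S j) (S k)) ∧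
      (∀ i, ∃ j, i ∈ S j) ∧
      (∀ j, ∀ i ∈ S j, ∀ k ∈ S j, p k / p i ≤ Γ) ∧
      (∀ j, ∑ i ∈ S j, p i ≤ 1) ∧
      (G : ℝ) ≤ 2 * (∑ i, p i) + (-Real.logb 2 (2 * θ)) / Real.logb 2 Γ + 1 := by
  obtain ⟨P, hP, hcard⟩ := exists_finpartition_boundedRatio hθpos (by linarith) hΓ hp
  obtain ⟨S, hSP, hne, hdisj, hcover⟩ := P.exists_fin_family
  have hL : logb Γ (2 * θ)⁻¹ = -logb 2 (2 * θ) / logb 2 Γ := by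
    simp only [logb, log_inv]
    field_simp
  exact ⟨_, S, hne, hdisj, hcover, fun j => (hP _ (hSP j)).1, fun j => (hP _ (hSP j)).2, hL ▸ hcard⟩
end

section
/- Let 0 < θ < 1/2 and let p : Fin n → ℝ satisfy θ < p i ≤ 1 for all i, with μ = ∑_i p i > 0. Then there exists G ∈ ℕ and a partition of Fin n into pairwise disjoint nonempty sets S_1, …, S_G covering Fin n, with each P_j = ∑_{i∈S_j} p i ≤ 1, such that ∑_{j=1}^G ( 1 + ∑_{i∈S_j} p i · ⌈log₂(P_j / p i)⌉ ) ≤ H + 3μ + 1 + 2·√( μ · (−log₂(2θ)) ), where H = ∑_i h(p i) and h is the binary entropy function. -/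
/-!
Pack the items greedily into blocks of probability at most `1`, so that any two blocks together
exceed `1`. Then at most one block has probability `≤ 1/2`, so there are at most `2μ + 1` blocks.
Since `P_j ≤ 1`, the Shannon–Fano length of item `i` is at most `1 - log₂ p i`, so the tests
inside the blocks cost at most `μ - ∑ p i log₂ p i ≤ μ + H`. This gives `H + 3μ + 1`, and the
square-root term is nonnegative.
-/

open Finset Real

namespace Finpartition

variable {α : Type*} [DecidableEq α]

lemma sum_sum_parts {M : Type*} [AddCommMonoid M] {s : Finset α} (P : Finpartition s)
    (f : α → M) : ∑ t ∈ P.parts, ∑ i ∈ t, f i = ∑ i ∈ s, f i := by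
  have := sum_biUnion (f := f) P.disjoint
  rw [P.biUnion_parts] at this
  exact this.symm

/-- Greedy bin packing: take a largest nonempty block of weight at most `1`, then recurse on the
rest. Every item left out of the block would overflow it, hence so would every later block. -/
theorem exists_sum_le_one_and_pairwise_one_lt_add (w : α → ℝ) (s : Finset α)
    (hw₀ : ∀ i ∈ s, 0 ≤ w i) (hw₁ : ∀ i ∈ s, w i ≤ 1) :
    ∃ P : Finpartition s, (∀ t ∈ P.parts, ∑ i ∈ t, w i ≤ 1) ∧
      (P.parts : Set (Finset α)).Pairwise fun t t' => 1 < ∑ i ∈ t, w i + ∑ i ∈ t', w i := by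
  induction s using Finset.strongInduction with
  | H s ih =>
  obtain rfl | ⟨i₀, hi₀⟩ := s.eq_empty_or_nonempty
  · exact ⟨Finpartition.empty _, by simp, by simp⟩
  set C := s.powerset.filter fun t => t.Nonempty ∧ ∑ i ∈ t, w i ≤ 1
  have hC : {i₀} ∈ C := by simpa [C, hi₀] using hw₁ i₀ hi₀
  obtain ⟨b, hbC, hbmax⟩ := C.exists_max_image card ⟨_, hC⟩
  obtain ⟨hbs, hbne, hb₁⟩ : b ⊆ s ∧ b.Nonempty ∧ ∑ i ∈ b, w i ≤ 1 := by
    simpa [C] using hbC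
  have hoverflow : ∀ i ∈ s \ b, 1 < ∑ j ∈ b, w j + w i := by
    intro i hi
    rw [mem_sdiff] at hi
    by_contra! h
    have : insert i b ∈ C := by
      simp only [C, mem_filter, mem_powerset, insert_subset_iff, sum_insert hi.2]
      exact ⟨⟨hi.1, hbs⟩, insert_nonempty _ _, by linarith⟩
    have := hbmax _ this
    rw [card_insert_of_notMem hi.2] at this
    omega
  obtain ⟨P, hP₁, hPpair⟩ := ih (s \ b) (sdiff_ssubset hbs hbne)
    (fun i hi => hw₀ i (mem_sdiff.1 hi).1) (fun i hi => hw₁ i (mem_sdiff.1 hi).1)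
  have hbt : ∀ t ∈ P.parts, 1 < ∑ i ∈ b, w i + ∑ i ∈ t, w i := by
    intro t ht
    obtain ⟨i, hi⟩ := P.nonempty_of_mem_parts ht
    have hit : w i ≤ ∑ j ∈ t, w j :=
      single_le_sum (fun j hj => hw₀ j (mem_sdiff.1 (P.le ht hj)).1) hi
    linarith [hoverflow i (P.le ht hi)]
  refine ⟨P.extend hbne.ne_empty sdiff_disjoint (sdiff_union_of_subset hbs), ?_, ?_⟩
  · simpa [extend_parts, hb₁] using hP₁
  · rw [extend_parts, coe_insert, Set.pairwise_insert]
    exact ⟨hPpair, fun t ht _ => ⟨hbt t ht, by linarith [hbt t ht]⟩⟩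

end Finpartition

/-- At most one element can have weight at most `1/2`. -/
theorem card_le_two_mul_sum_add_one {ι : Type*} (s : Finset ι) (f : ι → ℝ)
    (hf : ∀ i ∈ s, 0 ≤ f i) (h : (s : Set ι).Pairwise fun i j => 1 < f i + f j) :
    (#s : ℝ) ≤ 2 * ∑ i ∈ s, f i + 1 := by
  classical
  have hlight : #(s.filter fun i => f i ≤ 1 / 2) ≤ 1 := by
    rw [card_le_one]
    intro a ha b hb
    rw [mem_filter] at ha hb
    by_contra hab
    linarith [h ha.1 hb.1 hab]
  have hheavy : (#(s.filter fun i => ¬ f i ≤ 1 / 2) : ℝ) / 2 ≤ ∑ i ∈ s, f i :=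
    calc (#(s.filter fun i => ¬ f i ≤ 1 / 2) : ℝ) / 2
        = ∑ _i ∈ s.filter (fun i => ¬ f i ≤ 1 / 2), (1 / 2 : ℝ) := by simp; ring
      _ ≤ ∑ i ∈ s.filter (fun i => ¬ f i ≤ 1 / 2), f i :=
        sum_le_sum fun i hi => (not_le.1 (mem_filter.1 hi).2).le
      _ ≤ ∑ i ∈ s, f i :=
        sum_le_sum_of_subset_of_nonneg (filter_subset _ _) fun i hi _ => hf i hi
  have hsplit := card_filter_add_card_filter_not (s := s) (fun i => f i ≤ 1 / 2)
  have : (#s : ℝ) = #(s.filter fun i => f i ≤ 1 / 2) + #(s.filter fun i => ¬ f i ≤ 1 / 2) := by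
    exact_mod_cast hsplit.symm
  have : (#(s.filter fun i => f i ≤ 1 / 2) : ℝ) ≤ 1 := by exact_mod_cast hlight
  linarith

noncomputable def blockTestCost {α : Type*} (p : α → ℝ) (t : Finset α) : ℝ :=
  1 + ∑ i ∈ t, p i * ⌈logb 2 ((∑ k ∈ t, p k) / p i)⌉

theorem ceil_logb_div_le_one_sub_logb {P q : ℝ} (hP : 0 < P) (hP₁ : P ≤ 1) (hq : 0 < q) :
    (⌈logb 2 (P / q)⌉ : ℝ) ≤ 1 - logb 2 q := by
  have := Int.ceil_lt_add_one (logb 2 (P / q))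
  rw [logb_div hP.ne' hq.ne'] at this ⊢
  linarith [logb_nonpos one_lt_two hP.le hP₁]

theorem blockTestCost_le {α : Type*} (p : α → ℝ) {t : Finset α} (hp : ∀ i ∈ t, 0 < p i)
    (ht : ∑ i ∈ t, p i ≤ 1) : blockTestCost p t ≤ 1 + ∑ i ∈ t, p i * (1 - logb 2 (p i)) := by
  refine add_le_add le_rfl (sum_le_sum fun i hi => ?_)
  have hP : 0 < ∑ k ∈ t, p k := sum_pos' (fun k hk => (hp k hk).le) ⟨i, hi, hp i hi⟩
  exact mul_le_mul_of_nonneg_left (ceil_logb_div_le_one_sub_logb hP ht (hp i hi)) (hp i hi).le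

theorem mul_one_sub_logb_le_add_binEntropy {x : ℝ} (hx₀ : 0 ≤ x) (hx₁ : x ≤ 1) :
    x * (1 - logb 2 x) ≤ x + (-(x * logb 2 x) - (1 - x) * logb 2 (1 - x)) := by
  have : (1 - x) * logb 2 (1 - x) ≤ 0 :=
    mul_nonpos_of_nonneg_of_nonpos (by linarith) (logb_nonpos one_lt_two (by linarith) (by linarith))
  linarith

theorem expected_total_tests_bound_general {n : ℕ} (θ : ℝ)
    (hθpos : 0 < θ)
    (p : Fin n → ℝ) (hp : ∀ i, θ < p i ∧ p i ≤ 1) :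
    ∃ (G : ℕ) (S : Fin G → Finset (Fin n)),
      (∀ j, (S j).Nonempty) ∧
      (∀ j k, j ≠ k → Disjoint (S j) (S k)) ∧
      (∀ i, ∃ j, i ∈ S j) ∧
      (∀ j, ∑ i ∈ S j, p i ≤ 1) ∧
      (∑ j, (1 + ∑ i ∈ S j, p i * (⌈Real.logb 2 ((∑ k ∈ S j, p k) / p i)⌉ : ℝ))) ≤
        (∑ i, (-(p i * Real.logb 2 (p i)) - (1 - p i) * Real.logb 2 (1 - p i)))
          + 3 * (∑ i, p i) + 1
          + 2 * Real.sqrt ((∑ i, p i) * (-Real.logb 2 (2 * θ))) := by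
  have hp₀ : ∀ i, 0 < p i := fun i => hθpos.trans (hp i).1
  obtain ⟨P, hP₁, hPpair⟩ := Finpartition.exists_sum_le_one_and_pairwise_one_lt_add p univ
    (fun i _ => (hp₀ i).le) (fun i _ => (hp i).2)
  have hcard : (#P.parts : ℝ) ≤ 2 * ∑ i, p i + 1 := by
    simpa only [P.sum_sum_parts] using card_le_two_mul_sum_add_one P.parts _
      (fun t _ => sum_nonneg fun i _ => (hp₀ i).le) hPpair
  have hcost : ∑ t ∈ P.parts, blockTestCost p t ≤ #P.parts + ∑ i, p i * (1 - logb 2 (p i)) := by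
    calc ∑ t ∈ P.parts, blockTestCost p t
        ≤ ∑ t ∈ P.parts, (1 + ∑ i ∈ t, p i * (1 - logb 2 (p i))) :=
          sum_le_sum fun t ht => blockTestCost_le p (fun i _ => hp₀ i) (hP₁ t ht)
      _ = #P.parts + ∑ i, p i * (1 - logb 2 (p i)) := by
          rw [sum_add_distrib, P.sum_sum_parts, sum_const, nsmul_one]
  have hentropy := sum_le_sum fun i (_ : i ∈ univ) =>
    mul_one_sub_logb_le_add_binEntropy (hp₀ i).le (hp i).2
  rw [sum_add_distrib] at hentropy
  set e := P.parts.equivFin.symm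
  refine ⟨#P.parts, fun j => e j, fun j => P.nonempty_of_mem_parts (e j).2,
    fun j k hjk => P.disjoint (e j).2 (e k).2 (Subtype.coe_injective.ne (e.injective.ne hjk)),
    fun i => ?_, fun j => hP₁ _ (e j).2, ?_⟩
  · obtain ⟨t, ht, hit⟩ := P.exists_mem (mem_univ i)
    exact ⟨e.symm ⟨t, ht⟩, by simpa⟩
  · calc ∑ j, blockTestCost p (e j) = ∑ t ∈ P.parts, blockTestCost p t := by
          rw [e.sum_comp (fun t => blockTestCost p t), sum_coe_sort]
      _ ≤ _ := by linarith [sqrt_nonneg ((∑ i, p i) * (-logb 2 (2 * θ)))]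

/-- After discarding items of probability at most `θ`, there is a
partition of the population into `G` search sets `S_1, …, S_G`, each of total
probability `P_j ≤ 1`, such that the expected total number of tests
`∑_j (1 + ∑_{i ∈ S_j} p i ⌈log₂ (P_j / p i)⌉)` is at most
`H + 3μ + 1 + 2 √(μ (−log₂ (2θ)))`. -/
theorem expected_total_tests_bound {n : ℕ} (θ : ℝ)
    (hθpos : 0 < θ) (hθhalf : θ < 1 / 2)
    (p : Fin n → ℝ) (hp : ∀ i, θ < p i ∧ p i ≤ 1)
    (hμpos : 0 < ∑ i, p i) :
    ∃ (G : ℕ) (S : Fin G → Finset (Fin n)),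
      (∀ j, (S j).Nonempty) ∧
      (∀ j k, j ≠ k → Disjoint (S j) (S k)) ∧
      (∀ i, ∃ j, i ∈ S j) ∧
      (∀ j, ∑ i ∈ S j, p i ≤ 1) ∧
      (∑ j, (1 + ∑ i ∈ S j, p i * (⌈Real.logb 2 ((∑ k ∈ S j, p k) / p i)⌉ : ℝ))) ≤
        (∑ i, (-(p i * Real.logb 2 (p i)) - (1 - p i) * Real.logb 2 (1 - p i)))
          + 3 * (∑ i, p i) + 1
          + 2 * Real.sqrt ((∑ i, p i) * (-Real.logb 2 (2 * θ))) :=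
  expected_total_tests_bound_general θ hθpos p hp
end

section
/- Let p : Fin n → ℝ with 0 < p i ≤ 1, and let (U i) be independent Bernoulli random variables with P(U i = 1) = p i. Let ℓ : Fin n → ℝ with 0 ≤ ℓ i ≤ M for all i, where M > 0. Set L = ∑_i ℓ i² · p i · (1 − p i), and let H > 0 satisfy ∑_i ℓ i · p i ≤ H. Assume L ≥ 4M², and set ψ = (L/(4M²))^{−1/3}. Then P( ∑_i ℓ i · (U i − p i) ≥ ψ·H ) ≤ exp( − (L/(4M²))^{1/3} ). -/
/-!
Chernoff's method with the parameter `t = 1 / (2 M y)`, where `y = (L / (4 M²))^{1/3}`.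
Since `|t ℓ i| ≤ 1`, the bound `eˣ ≤ 1 + x + x²` shows that the centred summand
`ℓ i (U i - p i)` has moment generating function at most `exp (t² ℓ i² p i (1 - p i))`, so by
independence the sum has moment generating function at most `exp (t² L) = exp y`. On the other
hand `L ≤ M ∑ ℓ i p i ≤ M H` forces `H ≥ 4 M y³`, hence `t ψ H ≥ 2 y`, and the Chernoff bound
`exp (-t ψ H + t² L)` is at most `exp (-y)`.
-/

open MeasureTheory ProbabilityTheory Real

lemma bernoulli_centered_mgf_le {a q : ℝ} (ha : |a| ≤ 1) (hq0 : 0 ≤ q) (hq1 : q ≤ 1) :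
    q * exp (a * (1 - q)) + (1 - q) * exp (-(a * q)) ≤ exp (a ^ 2 * (q * (1 - q))) := by
  have exp_le (x : ℝ) (hx : |x| ≤ 1) : exp x ≤ 1 + x + x ^ 2 := by
    linarith [(abs_le.mp (abs_exp_sub_one_sub_id_le hx)).2]
  have hpos : |a * (1 - q)| ≤ 1 := by
    rw [abs_mul, abs_of_nonneg (sub_nonneg.mpr hq1)]
    nlinarith [abs_nonneg a]
  have hneg : |-(a * q)| ≤ 1 := by
    rw [abs_neg, abs_mul, abs_of_nonneg hq0]
    nlinarith [abs_nonneg a]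
  calc q * exp (a * (1 - q)) + (1 - q) * exp (-(a * q))
      ≤ q * (1 + a * (1 - q) + (a * (1 - q)) ^ 2)
        + (1 - q) * (1 + -(a * q) + (-(a * q)) ^ 2) := by
        have := exp_le _ hpos
        have := exp_le _ hneg
        gcongr
    _ = 1 + a ^ 2 * (q * (1 - q)) := by ring
    _ ≤ exp (a ^ 2 * (q * (1 - q))) := by linarith [add_one_le_exp (a ^ 2 * (q * (1 - q)))]

section BoolRandomVariable

variable {Ω : Type*} [MeasurableSpace Ω] {μ : Measure Ω} {U : Ω → Bool}

lemma integrable_comp_bool [IsFiniteMeasure μ] (hU : Measurable U) (g : Bool → ℝ) :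
    Integrable (fun ω => g (U ω)) μ :=
  Integrable.comp_measurable .of_finite hU

lemma integral_comp_bool [IsProbabilityMeasure μ] (hU : Measurable U) {q : ℝ} (hq : 0 ≤ q)
    (hUq : μ {ω | U ω = true} = ENNReal.ofReal q) (g : Bool → ℝ) :
    ∫ ω, g (U ω) ∂μ = q * g true + (1 - q) * g false := by
  have hs : MeasurableSet {ω | U ω = true} := hU (measurableSet_singleton true)
  have hg : (fun ω => g (U ω)) =
      fun ω => {ω | U ω = true}.indicator (fun _ => g true - g false) ω + g false := by
    funext ω
    by_cases h : U ω <;> simp [h]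
  have hμq : μ.real {ω | U ω = true} = q := by rw [measureReal_def, hUq, ENNReal.toReal_ofReal hq]
  rw [hg, integral_add ((integrable_const _).indicator hs) (integrable_const _),
    integral_indicator_const _ hs, integral_const, hμq]
  simp only [probReal_univ, smul_eq_mul]
  ring

lemma mgf_centered_indicator_le [IsProbabilityMeasure μ] (hU : Measurable U) {q : ℝ}
    (hq0 : 0 ≤ q) (hq1 : q ≤ 1) (hUq : μ {ω | U ω = true} = ENNReal.ofReal q) {l t : ℝ}
    (hlt : |t * l| ≤ 1) :
    mgf (fun ω => l * ((if U ω then 1 else 0) - q)) μ t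
      ≤ exp (t ^ 2 * (l ^ 2 * q * (1 - q))) := by
  rw [mgf, integral_comp_bool hU hq0 hUq (fun b => exp (t * (l * ((if b then 1 else 0) - q))))]
  convert bernoulli_centered_mgf_le hlt hq0 hq1 using 1
  · simp only [↓reduceIte, Bool.false_eq_true, zero_sub, mul_neg, mul_assoc]
  · ring_nf

end BoolRandomVariable

theorem measure_sum_ge_le_of_mgf_le {Ω ι : Type*} [MeasurableSpace Ω] {μ : Measure Ω}
    [Fintype ι] {X : ι → Ω → ℝ} (h_indep : iIndepFun X μ) (h_meas : ∀ i, Measurable (X i))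
    {t : ℝ} (ht : 0 ≤ t) (h_int : ∀ i, Integrable (fun ω => exp (t * X i ω)) μ)
    {v : ι → ℝ} (hv : ∀ i, mgf (X i) μ t ≤ exp (v i)) (ε : ℝ) :
    μ.real {ω | ε ≤ ∑ i, X i ω} ≤ exp (-t * ε + ∑ i, v i) := by
  have := h_indep.isProbabilityMeasure
  have h_sum := measure_ge_le_exp_mul_mgf ε ht
    (h_indep.integrable_exp_mul_sum h_meas (s := .univ) fun i _ => h_int i)
  simp only [Finset.sum_apply] at h_sum
  calc μ.real {ω | ε ≤ ∑ i, X i ω}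
      ≤ exp (-t * ε) * ∏ i, mgf (X i) μ t := by rwa [← h_indep.mgf_sum h_meas]
    _ ≤ exp (-t * ε) * ∏ i, exp (v i) := by
        gcongr with i
        · exact fun i _ => mgf_nonneg
        · exact hv i
    _ = exp (-t * ε + ∑ i, v i) := by rw [← exp_sum, exp_add]

theorem measure_weighted_bernoulli_sum_ge_le {Ω ι : Type*} [MeasurableSpace Ω]
    {μ : Measure Ω} [Fintype ι] {U : ι → Ω → Bool} (hU : ∀ i, Measurable (U i))
    (h_indep : iIndepFun U μ) {p : ι → ℝ} (hp : ∀ i, 0 ≤ p i ∧ p i ≤ 1)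
    (hUp : ∀ i, μ {ω | U i ω = true} = ENNReal.ofReal (p i)) {ℓ : ι → ℝ} {t : ℝ} (ht : 0 ≤ t)
    (htℓ : ∀ i, |t * ℓ i| ≤ 1) (ε : ℝ) :
    μ.real {ω | ε ≤ ∑ i, ℓ i * ((if U i ω then 1 else 0) - p i)}
      ≤ exp (-t * ε + t ^ 2 * ∑ i, ℓ i ^ 2 * p i * (1 - p i)) := by
  have := h_indep.isProbabilityMeasure
  set g : ι → Bool → ℝ := fun i b => ℓ i * ((if b then 1 else 0) - p i)
  rw [Finset.mul_sum]
  exact measure_sum_ge_le_of_mgf_le (X := fun i ω => g i (U i ω))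
    (h_indep.comp g fun _ => .of_discrete)
    (fun i => (Measurable.of_discrete (f := g i)).comp (hU i)) ht
    (fun i => integrable_comp_bool (hU i) fun b => exp (t * g i b))
    (fun i => mgf_centered_indicator_le (hU i) (hp i).1 (hp i).2 (hUp i) (htℓ i)) ε

lemma sum_sq_mul_mul_one_sub_le {ι : Type*} (s : Finset ι) {ℓ p : ι → ℝ} {M : ℝ}
    (hℓ : ∀ i ∈ s, 0 ≤ ℓ i ∧ ℓ i ≤ M) (hp : ∀ i ∈ s, 0 ≤ p i ∧ p i ≤ 1) :
    ∑ i ∈ s, ℓ i ^ 2 * p i * (1 - p i) ≤ M * ∑ i ∈ s, ℓ i * p i := by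
  rw [Finset.mul_sum]
  refine Finset.sum_le_sum fun i hi => ?_
  obtain ⟨hℓ0, hℓM⟩ := hℓ i hi
  obtain ⟨hp0, hp1⟩ := hp i hi
  calc ℓ i ^ 2 * p i * (1 - p i) ≤ ℓ i ^ 2 * p i * 1 := by gcongr; linarith
    _ = ℓ i * (ℓ i * p i) := by ring
    _ ≤ M * (ℓ i * p i) := by gcongr

lemma chernoff_exponent_le {M H L y : ℝ} (hM : 0 < M) (hy : 0 < y)
    (hL : L = 4 * M ^ 2 * y ^ 3) (hLH : L ≤ M * H) :
    -(2 * M * y)⁻¹ * (y⁻¹ * H) + (2 * M * y)⁻¹ ^ 2 * L ≤ -y := by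
  have hH : 4 * M * y ^ 3 ≤ H := le_of_mul_le_mul_left (by nlinarith) hM
  have hvar : (2 * M * y)⁻¹ ^ 2 * L = y := by rw [hL]; field_simp; ring
  have hmean : 2 * y ≤ (2 * M * y)⁻¹ * (y⁻¹ * H) := by
    rw [show (2 * M * y)⁻¹ * (y⁻¹ * H) = H / (2 * M * y ^ 2) by field_simp,
      le_div_iff₀ (by positivity)]
    linarith
  linarith

theorem tests_concentration_bound_general {n : ℕ} (p : Fin n → ℝ)
    (hp : ∀ i, 0 < p i ∧ p i ≤ 1)
    {Ω : Type*} [MeasurableSpace Ω] (μ : Measure Ω) [IsProbabilityMeasure μ]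
    (U : Fin n → Ω → Bool) (hUmeas : ∀ i, Measurable (U i))
    (hUindep : iIndepFun U μ)
    (hUp : ∀ i, μ {ω | U i ω = true} = ENNReal.ofReal (p i))
    (ℓ : Fin n → ℝ) (M : ℝ) (hM : 0 < M) (hℓ : ∀ i, 0 ≤ ℓ i ∧ ℓ i ≤ M)
    (L : ℝ) (hL : L = ∑ i, (ℓ i) ^ 2 * p i * (1 - p i))
    (H : ℝ) (hHbd : ∑ i, ℓ i * p i ≤ H)
    (hL4M : 4 * M ^ 2 ≤ L)
    (ψ : ℝ) (hψ : ψ = (L / (4 * M ^ 2)) ^ (-(1 / 3 : ℝ))) :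
    μ {ω | ψ * H ≤ ∑ i, ℓ i * ((if U i ω then (1 : ℝ) else 0) - p i)} ≤
      ENNReal.ofReal (Real.exp (-((L / (4 * M ^ 2)) ^ (1 / 3 : ℝ)))) := by
  have hM2 : 0 < 4 * M ^ 2 := by positivity
  have hr1 : 1 ≤ L / (4 * M ^ 2) := (one_le_div hM2).mpr hL4M
  set y := (L / (4 * M ^ 2)) ^ (1 / 3 : ℝ) with hy_def
  have hy1 : 1 ≤ y := one_le_rpow hr1 (by norm_num)
  have hLy : L = 4 * M ^ 2 * y ^ 3 := by
    rw [← rpow_natCast y 3, hy_def, ← rpow_mul (by linarith)]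
    norm_num
    field_simp
  have hψy : ψ = y⁻¹ := by rw [hψ, rpow_neg (by linarith)]
  have htℓ : ∀ i, |(2 * M * y)⁻¹ * ℓ i| ≤ 1 := fun i => by
    rw [abs_of_nonneg (by have := (hℓ i).1; positivity), inv_mul_le_iff₀ (by positivity)]
    nlinarith [(hℓ i).2]
  have hp' : ∀ i, 0 ≤ p i ∧ p i ≤ 1 := fun i => ⟨(hp i).1.le, (hp i).2⟩
  have hLH : L ≤ M * H :=
    hL ▸ (sum_sq_mul_mul_one_sub_le _ (fun i _ => hℓ i) (fun i _ => hp' i)).trans (by gcongr)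
  rw [← ofReal_measureReal]
  gcongr
  calc _ ≤ exp (-(2 * M * y)⁻¹ * (ψ * H) + (2 * M * y)⁻¹ ^ 2 * L) :=
        hL ▸ measure_weighted_bernoulli_sum_ge_le hUmeas hUindep hp' hUp (by positivity) htℓ (ψ * H)
    _ ≤ exp (-y) := by
        rw [hψy]
        exact exp_le_exp.mpr (chernoff_exponent_le hM (by positivity) hLy hLH)

/-- Concentration of the number of tests: with independent
Bernoulli(`p i`) indicators `U i` and search lengths `0 ≤ ℓ i ≤ M`, setting
`L = ∑ i, ℓ i² p i (1 − p i)` and `ψ = (L/(4M²))^{−1/3}`, if `∑ i, ℓ i p i ≤ H`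
and `L ≥ 4M²` then `P(∑ i, ℓ i (U i − p i) ≥ ψ H) ≤ exp (−(L/(4M²))^{1/3})`. -/
theorem tests_concentration_bound {n : ℕ} (p : Fin n → ℝ)
    (hp : ∀ i, 0 < p i ∧ p i ≤ 1)
    {Ω : Type*} [MeasurableSpace Ω] (μ : Measure Ω) [IsProbabilityMeasure μ]
    (U : Fin n → Ω → Bool) (hUmeas : ∀ i, Measurable (U i))
    (hUindep : iIndepFun U μ)
    (hUp : ∀ i, μ {ω | U i ω = true} = ENNReal.ofReal (p i))
    (ℓ : Fin n → ℝ) (M : ℝ) (hM : 0 < M) (hℓ : ∀ i, 0 ≤ ℓ i ∧ ℓ i ≤ M)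
    (L : ℝ) (hL : L = ∑ i, (ℓ i) ^ 2 * p i * (1 - p i))
    (H : ℝ) (hHpos : 0 < H) (hHbd : ∑ i, ℓ i * p i ≤ H)
    (hL4M : 4 * M ^ 2 ≤ L)
    (ψ : ℝ) (hψ : ψ = (L / (4 * M ^ 2)) ^ (-(1 / 3 : ℝ))) :
    μ {ω | ψ * H ≤ ∑ i, ℓ i * ((if U i ω then (1 : ℝ) else 0) - p i)} ≤
      ENNReal.ofReal (Real.exp (-((L / (4 * M ^ 2)) ^ (1 / 3 : ℝ)))) :=
  tests_concentration_bound_general p hp μ U hUmeas hUindep hUp ℓ M hM hℓ L hL H hHbd hL4M ψ hψ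
end
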